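/- Two-part construction (achievability core of Theorem 2): let n ≥ 1, let X : Ω → ZMod n, Y : Ω → 𝒴, U : Ω → 𝒰 (𝒴, 𝒰 finite) be random variables on a common probability space with I[U:X] = 0 and H[Y|(X,U)] = 0, and let W : Ω → ZMod n be uniformly distributed on ZMod n and independent of the triple (X, U, Y). Define the encoded message C = (U, X + W), where addition is in ZMod n. Then: (i) I[C:X] = 0 (perfect privacy); (ii) H[Y | (C, W)] = 0 (losslessness: Y is recoverable from the message and the shared key); and (iii) H[C] = H[U] + log n. -/
import Mathlib


open MeasureTheory ProbabilityTheory Real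

noncomputable section

variable {Ω : Type*} [MeasurableSpace Ω]

/-- Shannon entropy (natural logarithm) of a finite-valued random variable `Z` under `μ`. -/
def ent {S : Type*} [Fintype S] (μ : Measure Ω) (Z : Ω → S) : ℝ :=
  ∑ z : S, Real.negMulLog (μ (Z ⁻¹' {z})).toReal

/-- Conditional entropy `H[Z₁ | Z₂] = H[(Z₁,Z₂)] - H[Z₂]`. -/
def condEnt {S T : Type*} [Fintype S] [Fintype T] (μ : Measure Ω)
    (Z₁ : Ω → S) (Z₂ : Ω → T) : ℝ :=
  ent μ (fun ω => (Z₁ ω, Z₂ ω)) - ent μ Z₂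

/-- Mutual information `I[Z₁ : Z₂] = H[Z₁] + H[Z₂] - H[(Z₁,Z₂)]`. -/
def mutInfo {S T : Type*} [Fintype S] [Fintype T] (μ : Measure Ω)
    (Z₁ : Ω → S) (Z₂ : Ω → T) : ℝ :=
  ent μ Z₁ + ent μ Z₂ - ent μ (fun ω => (Z₁ ω, Z₂ ω))

/-- Conditional mutual information
`I[Z₁ : Z₂ | Z₃] = H[(Z₁,Z₃)] + H[(Z₂,Z₃)] - H[(Z₁,Z₂,Z₃)] - H[Z₃]`. -/
def condMutInfo {S T R : Type*} [Fintype S] [Fintype T] [Fintype R] (μ : Measure Ω)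
    (Z₁ : Ω → S) (Z₂ : Ω → T) (Z₃ : Ω → R) : ℝ :=
  ent μ (fun ω => (Z₁ ω, Z₃ ω)) + ent μ (fun ω => (Z₂ ω, Z₃ ω))
    - ent μ (fun ω => (Z₁ ω, Z₂ ω, Z₃ ω)) - ent μ Z₃

-- aux 1: entropy invariant under equiv
lemma ent_comp_equiv {S T : Type*} [Fintype S] [Fintype T] (μ : Measure Ω) (Z : Ω → S)
    (e : S ≃ T) : ent μ (fun ω => e (Z ω)) = ent μ Z := by
  unfold ent
  apply Fintype.sum_equiv e.symm
  intro t
  have : (fun ω => e (Z ω)) ⁻¹' {t} = Z ⁻¹' {e.symm t} := by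
    ext ω; simp [Equiv.eq_symm_apply, eq_comm]
  rw [this]

-- aux 2: pmf sums to one
lemma sum_pmf_eq_one {S : Type*} [Fintype S] [MeasurableSpace S] [MeasurableSingletonClass S]
    (μ : Measure Ω) [IsProbabilityMeasure μ] {Z : Ω → S} (hZ : Measurable Z) :
    ∑ z : S, (μ (Z ⁻¹' {z})).toReal = 1 := by
  have h := sum_measure_preimage_singleton (μ := μ) (Finset.univ : Finset S)
    (fun y _ => hZ (measurableSet_singleton y))
  simp only [Finset.coe_univ, Set.preimage_univ, measure_univ] at h
  rw [← ENNReal.toReal_sum (fun z _ => measure_ne_top μ _), h, ENNReal.toReal_one]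

-- aux real identity
lemma negMulLog_div_nat {n : ℕ} (hn : n ≠ 0) (p : ℝ) :
    (n : ℝ) * Real.negMulLog (p * (n : ℝ)⁻¹) = Real.negMulLog p + p * Real.log n := by
  rcases eq_or_ne p 0 with rfl | hp
  · simp [Real.negMulLog]
  · have hn' : (n : ℝ) ≠ 0 := Nat.cast_ne_zero.mpr hn
    rw [Real.negMulLog, Real.negMulLog, Real.log_mul hp (inv_ne_zero hn'), Real.log_inv]
    field_simp
    ring

-- aux 3: entropy of a pair with an "independent uniform" coordinate
lemma ent_pair_uniform {n : ℕ} [NeZero n] [MeasurableSpace (ZMod n)]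
    [MeasurableSingletonClass (ZMod n)]
    {S : Type*} [Fintype S] [MeasurableSpace S] [MeasurableSingletonClass S]
    (μ : Measure Ω) [IsProbabilityMeasure μ] {Z : Ω → S} (hZ : Measurable Z)
    (Z' : Ω → S × ZMod n)
    (h : ∀ z s, μ (Z' ⁻¹' {(z, s)}) = μ (Z ⁻¹' {z}) * (n : ENNReal)⁻¹) :
    ent μ Z' = ent μ Z + Real.log n := by
  have hn : (n : ℕ) ≠ 0 := NeZero.ne n
  unfold ent
  rw [Fintype.sum_prod_type]
  have hterm : ∀ z : S, ∀ s : ZMod n,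
      Real.negMulLog (μ (Z' ⁻¹' {(z, s)})).toReal
        = Real.negMulLog ((μ (Z ⁻¹' {z})).toReal * (n : ℝ)⁻¹) := by
    intro z s
    rw [h z s, ENNReal.toReal_mul]
    congr 1
    simp [ENNReal.toReal_inv]
  calc ∑ z : S, ∑ s : ZMod n, Real.negMulLog (μ (Z' ⁻¹' {(z, s)})).toReal
      = ∑ z : S, (n : ℝ) * Real.negMulLog ((μ (Z ⁻¹' {z})).toReal * (n : ℝ)⁻¹) := by
        refine Finset.sum_congr rfl fun z _ => ?_
        rw [Finset.sum_congr rfl fun s _ => hterm z s, Finset.sum_const, Finset.card_univ, ZMod.card, nsmul_eq_mul]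
    _ = ∑ z : S, (Real.negMulLog (μ (Z ⁻¹' {z})).toReal
          + (μ (Z ⁻¹' {z})).toReal * Real.log n) := by
        exact Finset.sum_congr rfl fun z _ => negMulLog_div_nat hn _
    _ = (∑ z : S, Real.negMulLog (μ (Z ⁻¹' {z})).toReal) + Real.log n := by
        rw [Finset.sum_add_distrib, ← Finset.sum_mul, sum_pmf_eq_one μ hZ, one_mul]

-- aux 4: master pmf lemma
lemma master_pmf
    {n : ℕ} [NeZero n] [MeasurableSpace (ZMod n)] [MeasurableSingletonClass (ZMod n)]
    {𝒴 𝒰 : Type*}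
    [Fintype 𝒴] [MeasurableSpace 𝒴] [MeasurableSingletonClass 𝒴]
    [Fintype 𝒰] [MeasurableSpace 𝒰] [MeasurableSingletonClass 𝒰]
    (μ : Measure Ω) [IsProbabilityMeasure μ]
    (X : Ω → ZMod n) (Y : Ω → 𝒴) (U : Ω → 𝒰) (W : Ω → ZMod n)
    (hX : Measurable X) (hY : Measurable Y) (hU : Measurable U) (hW : Measurable W)
    (hWunif : ∀ w : ZMod n, μ (W ⁻¹' {w}) = (n : ENNReal)⁻¹)
    (hWindep : IndepFun W (fun ω => (X ω, U ω, Y ω)) μ)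
    {S' : Type*} [Fintype S'] (pr : ZMod n × 𝒰 × 𝒴 → S') (z : S') (s : ZMod n) :
    μ ((fun ω => (pr (X ω, U ω, Y ω), X ω + W ω)) ⁻¹' {(z, s)})
      = μ ((fun ω => pr (X ω, U ω, Y ω)) ⁻¹' {z}) * (n : ENNReal)⁻¹ := by
  classical
  set V : Ω → ZMod n × 𝒰 × 𝒴 := fun ω => (X ω, U ω, Y ω) with hV
  have hVmeas : Measurable V := hX.prodMk (hU.prodMk hY)
  have hsing : ∀ (a : ZMod n × 𝒰 × 𝒴) (w : ZMod n),
      μ (V ⁻¹' {a} ∩ W ⁻¹' {w}) = μ (V ⁻¹' {a}) * (n : ENNReal)⁻¹ := by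
    intro a w
    have := hWindep.symm.measure_inter_preimage_eq_mul
      (s := ({a} : Set (ZMod n × 𝒰 × 𝒴))) (t := ({w} : Set (ZMod n)))
      (measurableSet_singleton a) (measurableSet_singleton w)
    rw [this, hWunif w]
  have hTmeas : Measurable (fun ω => (V ω, W ω)) := hVmeas.prodMk hW
  set A : Finset ((ZMod n × 𝒰 × 𝒴) × ZMod n) :=
    Finset.univ.filter (fun p => pr p.1 = z ∧ p.1.1 + p.2 = s) with hA
  have hset : (fun ω => (pr (V ω), X ω + W ω)) ⁻¹' {(z, s)}
      = (fun ω => (V ω, W ω)) ⁻¹' ↑A := by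
    ext ω
    simp [hA, Prod.ext_iff, hV]
  rw [hset, ← sum_measure_preimage_singleton A
    (fun p _ => hTmeas (measurableSet_singleton p))]
  have hfib : ∀ p : (ZMod n × 𝒰 × 𝒴) × ZMod n,
      (fun ω => (V ω, W ω)) ⁻¹' {p} = V ⁻¹' {p.1} ∩ W ⁻¹' {p.2} := by
    intro p; ext ω; simp [Prod.ext_iff]
  calc ∑ p ∈ A, μ ((fun ω => (V ω, W ω)) ⁻¹' {p})
      = ∑ p ∈ A, μ (V ⁻¹' {p.1}) * (n : ENNReal)⁻¹ := by
        refine Finset.sum_congr rfl fun p _ => ?_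
        rw [hfib p, hsing p.1 p.2]
    _ = ∑ a ∈ Finset.univ.filter (fun a : ZMod n × 𝒰 × 𝒴 => pr a = z),
          μ (V ⁻¹' {a}) * (n : ENNReal)⁻¹ := by
        refine Finset.sum_nbij' (fun p => p.1) (fun a => (a, s - a.1)) ?_ ?_ ?_ ?_ ?_
        · intro p hp
          simp only [hA, Finset.mem_filter, Finset.mem_univ, true_and] at hp ⊢
          exact hp.1
        · intro a ha
          simp only [hA, Finset.mem_filter, Finset.mem_univ, true_and] at ha ⊢
          exact ⟨ha, by ring⟩
        · intro p hp
          simp only [hA, Finset.mem_filter, Finset.mem_univ, true_and] at hp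
          have : s - p.1.1 = p.2 := by
            rw [← hp.2]; ring
          simp [this]
        · intro a ha; rfl
        · intro p hp; rfl
    _ = μ (V ⁻¹' (pr ⁻¹' {z})) * (n : ENNReal)⁻¹ := by
        rw [← Finset.sum_mul, sum_measure_preimage_singleton _
          (fun a _ => hVmeas (measurableSet_singleton a))]
        congr 2
        ext a
        simp
    _ = μ ((fun ω => pr (V ω)) ⁻¹' {z}) * (n : ENNReal)⁻¹ := rfl

theorem two_part_construction'
    {n : ℕ} [NeZero n] [MeasurableSpace (ZMod n)] [MeasurableSingletonClass (ZMod n)]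
    {𝒴 𝒰 : Type*}
    [Fintype 𝒴] [Nonempty 𝒴] [MeasurableSpace 𝒴] [MeasurableSingletonClass 𝒴]
    [Fintype 𝒰] [Nonempty 𝒰] [MeasurableSpace 𝒰] [MeasurableSingletonClass 𝒰]
    (μ : Measure Ω) [IsProbabilityMeasure μ]
    (X : Ω → ZMod n) (Y : Ω → 𝒴) (U : Ω → 𝒰) (W : Ω → ZMod n)
    (hX : Measurable X) (hY : Measurable Y) (hU : Measurable U) (hW : Measurable W)
    (hUX : (ent μ U + ent μ X - ent μ (fun ω => (U ω, X ω))) = 0)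
    (hYXU : (ent μ (fun ω => (Y ω, (X ω, U ω))) - ent μ (fun ω => (X ω, U ω))) = 0)
    (hWunif : ∀ w : ZMod n, μ (W ⁻¹' {w}) = (n : ENNReal)⁻¹)
    (hWindep : IndepFun W (fun ω => (X ω, U ω, Y ω)) μ) :
    (ent μ (fun ω => (U ω, X ω + W ω)) + ent μ X
        - ent μ (fun ω => ((U ω, X ω + W ω), X ω))) = 0 ∧
    (ent μ (fun ω => (Y ω, ((U ω, X ω + W ω), W ω)))
        - ent μ (fun ω => ((U ω, X ω + W ω), W ω))) = 0 ∧
    ent μ (fun ω => (U ω, X ω + W ω)) = ent μ U + Real.log n := by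
  have hC : ent μ (fun ω => (U ω, X ω + W ω)) = ent μ U + Real.log n :=
    ent_pair_uniform μ hU _
      (fun z s => master_pmf μ X Y U W hX hY hU hW hWunif hWindep (fun a => a.2.1) z s)
  have hUXs : ent μ (fun ω => ((U ω, X ω), X ω + W ω))
      = ent μ (fun ω => (U ω, X ω)) + Real.log n :=
    ent_pair_uniform μ (hU.prodMk hX) _
      (fun z s => master_pmf μ X Y U W hX hY hU hW hWunif hWindep (fun a => (a.2.1, a.1)) z s)
  have hXUs : ent μ (fun ω => ((X ω, U ω), X ω + W ω))
      = ent μ (fun ω => (X ω, U ω)) + Real.log n :=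
    ent_pair_uniform μ (hX.prodMk hU) _
      (fun z s => master_pmf μ X Y U W hX hY hU hW hWunif hWindep (fun a => (a.1, a.2.1)) z s)
  have hYXUs : ent μ (fun ω => ((Y ω, (X ω, U ω)), X ω + W ω))
      = ent μ (fun ω => (Y ω, (X ω, U ω))) + Real.log n :=
    ent_pair_uniform μ (hY.prodMk (hX.prodMk hU)) _
      (fun z s => master_pmf μ X Y U W hX hY hU hW hWunif hWindep
        (fun a => (a.2.2, (a.1, a.2.1))) z s)
  -- (C, X) via an equivalence
  let e₁ : (𝒰 × ZMod n) × ZMod n ≃ (𝒰 × ZMod n) × ZMod n :=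
    ⟨fun p => ((p.1.1, p.2), p.1.2), fun p => ((p.1.1, p.2), p.1.2),
      fun p => rfl, fun p => rfl⟩
  have hCX : ent μ (fun ω => ((U ω, X ω + W ω), X ω))
      = ent μ (fun ω => ((U ω, X ω), X ω + W ω)) := by
    have h1 : (fun ω => ((U ω, X ω + W ω), X ω))
        = fun ω => e₁ ((U ω, X ω), X ω + W ω) := rfl
    rw [h1, ent_comp_equiv]
  -- (C, W) via an equivalence
  let e₂ : (ZMod n × 𝒰) × ZMod n ≃ (𝒰 × ZMod n) × ZMod n :=
    ⟨fun p => ((p.1.2, p.2), p.2 - p.1.1), fun q => ((q.1.2 - q.2, q.1.1), q.1.2),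
      fun p => by simp [sub_sub_cancel], fun q => by simp [sub_sub_cancel]⟩
  have hCW : ent μ (fun ω => ((U ω, X ω + W ω), W ω))
      = ent μ (fun ω => ((X ω, U ω), X ω + W ω)) := by
    have h2 : (fun ω => ((U ω, X ω + W ω), W ω))
        = fun ω => e₂ ((X ω, U ω), X ω + W ω) := by
      funext ω
      show _ = ((U ω, X ω + W ω), X ω + W ω - X ω)
      rw [add_sub_cancel_left]
    rw [h2, ent_comp_equiv]
  -- (Y, (C, W)) via an equivalence
  let e₃ : (𝒴 × (ZMod n × 𝒰)) × ZMod n ≃ 𝒴 × ((𝒰 × ZMod n) × ZMod n) :=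
    ⟨fun p => (p.1.1, ((p.1.2.2, p.2), p.2 - p.1.2.1)),
      fun q => ((q.1, (q.2.1.2 - q.2.2, q.2.1.1)), q.2.1.2),
      fun p => by simp [sub_sub_cancel], fun q => by simp [sub_sub_cancel]⟩
  have hYCW : ent μ (fun ω => (Y ω, ((U ω, X ω + W ω), W ω)))
      = ent μ (fun ω => ((Y ω, (X ω, U ω)), X ω + W ω)) := by
    have h3 : (fun ω => (Y ω, ((U ω, X ω + W ω), W ω)))
        = fun ω => e₃ ((Y ω, (X ω, U ω)), X ω + W ω) := by
      funext ω
      show _ = (Y ω, ((U ω, X ω + W ω), X ω + W ω - X ω))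
      rw [add_sub_cancel_left]
    rw [h3, ent_comp_equiv]
  refine ⟨?_, ?_, hC⟩
  · rw [hC, hCX, hUXs]; linarith
  · rw [hYCW, hCW, hXUs, hYXUs]; linarith

/-- Two-part construction (achievability core of Theorem 2): the encoded message
`C = (U, X + W)` with a one-time pad on the private data is perfectly private,
lossless given the shared key, and has entropy `H[U] + log n`. -/
theorem two_part_construction
    {n : ℕ} [NeZero n] [MeasurableSpace (ZMod n)] [MeasurableSingletonClass (ZMod n)]
    {𝒴 𝒰 : Type*}
    [Fintype 𝒴] [Nonempty 𝒴] [MeasurableSpace 𝒴] [MeasurableSingletonClass 𝒴]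
    [Fintype 𝒰] [Nonempty 𝒰] [MeasurableSpace 𝒰] [MeasurableSingletonClass 𝒰]
    (μ : Measure Ω) [IsProbabilityMeasure μ]
    (X : Ω → ZMod n) (Y : Ω → 𝒴) (U : Ω → 𝒰) (W : Ω → ZMod n)
    (hX : Measurable X) (hY : Measurable Y) (hU : Measurable U) (hW : Measurable W)
    (hUX : mutInfo μ U X = 0)
    (hYXU : condEnt μ Y (fun ω => (X ω, U ω)) = 0)
    (hWunif : ∀ w : ZMod n, μ (W ⁻¹' {w}) = (n : ENNReal)⁻¹)
    (hWindep : IndepFun W (fun ω => (X ω, U ω, Y ω)) μ) :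
    mutInfo μ (fun ω => (U ω, X ω + W ω)) X = 0 ∧
    condEnt μ Y (fun ω => ((U ω, X ω + W ω), W ω)) = 0 ∧
    ent μ (fun ω => (U ω, X ω + W ω)) = ent μ U + Real.log n := by
  exact two_part_construction' μ X Y U W hX hY hU hW hUX hYXU hWunif hWindep
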